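/- For every positive integer $n$, the function $F_n(x) = \frac{(2n-1)!}{\pi(1+2ix)^{2n}}$ is integrable on $\mathbb{R}$ and its Fourier transform is real-valued. -/

import Mathlib

open Real MeasureTheory

noncomputable def ft (F : ℝ → ℂ) (t : ℝ) : ℂ :=
  ∫ x : ℝ, F x * Complex.exp (-(2 * π * t * x) * Complex.I)

noncomputable def Fn (n : ℕ) (x : ℝ) : ℂ :=
  (Nat.factorial (2 * n - 1) : ℂ) / (π * (1 + 2 * Complex.I * x) ^ (2 * n))

lemma denom_ne (x : ℝ) : (1 + 2 * Complex.I * (x:ℂ)) ≠ 0 := by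
  intro h
  have := congrArg Complex.re h
  simp [Complex.add_re, Complex.mul_re] at this

lemma Fn_cont (n : ℕ) : Continuous (Fn n) := by
  apply Continuous.div continuous_const
  · fun_prop
  · intro x
    exact mul_ne_zero (Complex.ofReal_ne_zero.mpr Real.pi_ne_zero)
      (pow_ne_zero _ (denom_ne x))

lemma Fn_norm (n : ℕ) (x : ℝ) :
    ‖Fn n x‖ = (Nat.factorial (2 * n - 1) : ℝ) / (π * (1 + 4 * x ^ 2) ^ n) := by
  have h1 : ‖(1 + 2 * Complex.I * (x:ℂ)) ^ (2 * n)‖ = (1 + 4 * x ^ 2) ^ n := by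
    rw [norm_pow, pow_mul]
    congr 1
    rw [Complex.sq_norm]
    simp [Complex.normSq_apply]
    ring

  simp [Fn, norm_div, norm_mul, h1, abs_of_pos Real.pi_pos]

lemma Fn_int (n : ℕ) (hn : 0 < n) : Integrable (Fn n) := by
  have C := (Nat.factorial (2 * n - 1) : ℝ) / π
  apply (((integrable_inv_one_add_sq).const_mul
    ((Nat.factorial (2 * n - 1) : ℝ) / π)).mono (Fn_cont n).aestronglyMeasurable)
  filter_upwards with x
  rw [Fn_norm]
  have h1 : (1:ℝ) + x ^ 2 ≤ (1 + 4 * x ^ 2) ^ n := by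
    calc (1:ℝ) + x ^ 2 ≤ 1 + 4 * x ^ 2 := by nlinarith
    _ ≤ (1 + 4 * x ^ 2) ^ n := le_self_pow₀ (by nlinarith) hn.ne'
  have h2 : (0:ℝ) < 1 + x ^ 2 := by positivity
  rw [Real.norm_eq_abs, abs_of_nonneg (by positivity), ← div_div, mul_comm,
    ← div_eq_mul_inv]
  gcongr

lemma Fn_conj (n : ℕ) (x : ℝ) : Fn n (-x) = (starRingEnd ℂ) (Fn n x) := by
  simp [Fn, map_div₀, map_mul, map_pow, map_add, Complex.conj_I, map_ofNat]

theorem Fn_integrable_and_ft_real (n : ℕ) (hn : 0 < n) :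
    Integrable (Fn n) ∧ ∀ ξ : ℝ, (ft (Fn n) ξ).im = 0 := by
  refine ⟨Fn_int n hn, fun ξ => ?_⟩
  have key : (starRingEnd ℂ) (ft (Fn n) ξ) = ft (Fn n) ξ := by
    unfold ft
    rw [← integral_conj,
      show (∫ x : ℝ, Fn n x * Complex.exp (-(2 * π * ξ * x) * Complex.I))
        = ∫ x : ℝ, Fn n (-x) * Complex.exp (-(2 * π * ξ * (-x : ℝ)) * Complex.I) from
        (MeasureTheory.integral_neg_eq_self _ _).symm]
    congr 1
    ext x
    rw [Fn_conj, map_mul, ← Complex.exp_conj]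
    congr 2
    simp [map_ofNat]

  exact Complex.conj_eq_iff_im.mp key
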